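/- Let n ≥ 4 be an even integer, k ≥ 2, 1 ≤ i < j ≤ k, and u, v ∈ {1,…,n}. Then ⟨q_{ij}^{uv}, p⟩ = sin²(π/n)/2 for each p ∈ {p_{iu}, p_{iū}, p_{jv}, p_{j v̄}}, and ‖q_{ij}^{uv}‖² = sin²(π/n)/2. In particular, all constraint points q_{ij}^{uv} lie on the sphere of radius sin(π/n)/√2 centered at the origin, and the affine hyperplane of the 4-dimensional coordinate subspace spanned by planes i and j that passes through p_{iu}, p_{iū}, p_{jv}, p_{j v̄} is {x : ⟨q_{ij}^{uv}, x⟩ = ‖q_{ij}^{uv}‖²}, which touches that sphere exactly at q_{ij}^{uv}. -/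

import Mathlib

open scoped RealInnerProductSpace
open Real

/-- The scaffolding point `p_{iu}` in `ℝ^{2k}`: its `i`-th coordinate pair is
`(cos((u−1)·2π/n), sin((u−1)·2π/n))` and its other coordinates are `0`. -/
noncomputable def scafPt (n k : ℕ) (i : Fin k) (u : ℕ) :
    EuclideanSpace ℝ (Fin (2 * k)) :=
  (WithLp.equiv 2 (Fin (2 * k) → ℝ)).symm fun idx =>
    if (idx : ℕ) = 2 * (i : ℕ) then Real.cos (((u : ℝ) - 1) * (2 * Real.pi) / n)
    else if (idx : ℕ) = 2 * (i : ℕ) + 1 then Real.sin (((u : ℝ) - 1) * (2 * Real.pi) / n)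
    else 0

/-- The scaffolding point set `P = {p_{iu} : 1 ≤ i ≤ k, 1 ≤ u ≤ n}`. -/
noncomputable def scafSet (n k : ℕ) : Set (EuclideanSpace ℝ (Fin (2 * k))) :=
  {x | ∃ i : Fin k, ∃ u ∈ Finset.Icc 1 n, x = scafPt n k i u}

/-- The antipodal partner `u' ∈ {1,…,n}` of `u ∈ {1,…,n}`: the unique element of
`{1,…,n}` congruent to `u + n/2` modulo `n`. -/
def antip (n u : ℕ) : ℕ := (u - 1 + n / 2) % n + 1

/-- The almost antipodal partner `ū ∈ {1,…,n}` of `u ∈ {1,…,n}`: the unique element of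
`{1,…,n}` congruent to `u + n/2 + 1` modulo `n`. -/
def almostAntip (n u : ℕ) : ℕ := (u - 1 + n / 2 + 1) % n + 1

/-- The half of the scaffolding set selected by a tuple `(u_1,…,u_k) ∈ {1,…,n}^k`:
`P(u_1,…,u_k) = {p_{it} : 1 ≤ i ≤ k, t ∈ {1,…,n}, t ≡ u_i − s (mod n)` for some
`s ∈ {0,…,n/2−1}}`. -/
noncomputable def scafHalf (n k : ℕ) (U : Fin k → ℕ) :
    Set (EuclideanSpace ℝ (Fin (2 * k))) :=
  {x | ∃ i : Fin k, ∃ t ∈ Finset.Icc 1 n,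
    (∃ s < n / 2, t + s ≡ U i [MOD n]) ∧ x = scafPt n k i t}

/-- The affine hyperplane `{x : ⟪a, x⟫ = b}`. -/
def hyp {k : ℕ} (a : EuclideanSpace ℝ (Fin (2 * k))) (b : ℝ) :
    Set (EuclideanSpace ℝ (Fin (2 * k))) := {x | ⟪a, x⟫ = b}

/-- The constraint point `q_{ij}^{uv}`: the centroid of `p_{iu}, p_{iū}, p_{jv}, p_{jv̄}`. -/
noncomputable def constrPt (n k : ℕ) (i j : Fin k) (u v : ℕ) :
    EuclideanSpace ℝ (Fin (2 * k)) :=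
  (1 / 4 : ℝ) • (scafPt n k i u + scafPt n k i (almostAntip n u)
    + scafPt n k j v + scafPt n k j (almostAntip n v))

/-!
The four points are unit vectors. The two in plane `i` sit at angles differing by
`π + 2π/n` modulo `2π`, so their inner product is `-cos(2π/n) = 2 sin²(π/n) - 1`; likewise
in plane `j`, and points of different planes are orthogonal. Hence their centroid `q` has
inner product `(1 + 2 sin²(π/n) - 1)/4 = sin²(π/n)/2` with each of them, and `‖q‖²` is the
average of these four values. Tangency is `‖x - q‖² = ‖x‖² - 2⟪q, x⟫ + ‖q‖² = 0`.
-/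

noncomputable def scafAngle (n u : ℕ) : ℝ := ((u : ℝ) - 1) * (2 * π) / n

lemma scafPt_apply (n k : ℕ) (i : Fin k) (u : ℕ) (idx : Fin (2 * k)) :
    scafPt n k i u idx =
      if (idx : ℕ) = 2 * (i : ℕ) then cos (scafAngle n u)
      else if (idx : ℕ) = 2 * (i : ℕ) + 1 then sin (scafAngle n u) else 0 := rfl

lemma inner_scafPt_same_plane (n k : ℕ) (i : Fin k) (u v : ℕ) :
    ⟪scafPt n k i u, scafPt n k i v⟫ = cos (scafAngle n u - scafAngle n v) := by
  have hi := i.isLt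
  let e : Fin (2 * k) := ⟨2 * i, by omega⟩
  let o : Fin (2 * k) := ⟨2 * i + 1, by omega⟩
  rw [PiLp.inner_apply, Fintype.sum_eq_add e o (by simp [e, o, Fin.ext_iff])]
  · simp only [RCLike.inner_apply, conj_trivial, scafPt_apply, e, o, ↓reduceIte,
      Nat.add_eq_left, one_ne_zero, cos_sub]
    ring
  · intro c hc
    have he : (c : ℕ) ≠ 2 * i := fun h => hc.1 (Fin.ext h)
    have ho : (c : ℕ) ≠ 2 * i + 1 := fun h => hc.2 (Fin.ext h)
    simp [scafPt_apply, he, ho]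

lemma inner_scafPt_of_ne (n k : ℕ) {i j : Fin k} (hij : i ≠ j) (u v : ℕ) :
    ⟪scafPt n k i u, scafPt n k j v⟫ = 0 := by
  have hij : (i : ℕ) ≠ j := Fin.val_injective.ne hij
  refine Finset.sum_eq_zero fun c _ => ?_
  simp only [RCLike.inner_apply, conj_trivial, scafPt_apply]
  split_ifs <;> first | omega | simp

lemma norm_scafPt (n k : ℕ) (i : Fin k) (u : ℕ) : ‖scafPt n k i u‖ = 1 := by
  rw [norm_eq_sqrt_real_inner, inner_scafPt_same_plane, sub_self, cos_zero, sqrt_one]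

lemma exists_scafAngle_almostAntip {n u : ℕ} (hn : 0 < n) (hneven : Even n) (hu : 1 ≤ u) :
    ∃ m : ℤ,
      scafAngle n (almostAntip n u) = scafAngle n u + (π + 2 * (π / n)) + m * (2 * π) := by
  obtain ⟨t, rfl⟩ := hneven
  have hdiv := Nat.mod_add_div (u - 1 + (t + t) / 2 + 1) (t + t)
  generalize (u - 1 + (t + t) / 2 + 1) / (t + t) = m at hdiv
  have hcast : (almostAntip (t + t) u : ℝ) + (t + t) * m = u + t + 1 := by
    have : almostAntip (t + t) u + (t + t) * m = u + t + 1 := by unfold almostAntip; omega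
    exact_mod_cast this
  have ht : (t : ℝ) ≠ 0 := by exact_mod_cast (by omega : t ≠ 0)
  refine ⟨-m, ?_⟩
  simp only [scafAngle, eq_sub_of_add_eq hcast]
  push_cast
  field_simp
  ring

lemma inner_scafPt_almostAntip (n k : ℕ) {u : ℕ} (hn : 0 < n) (hneven : Even n) (hu : 1 ≤ u)
    (i : Fin k) :
    ⟪scafPt n k i u, scafPt n k i (almostAntip n u)⟫ = 2 * sin (π / n) ^ 2 - 1 := by
  obtain ⟨m, hm⟩ := exists_scafAngle_almostAntip hn hneven hu
  rw [real_inner_comm, inner_scafPt_same_plane, hm, add_assoc, add_sub_cancel_left,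
    cos_add_int_mul_two_pi, cos_add, cos_pi, sin_pi, cos_two_mul, cos_sq']
  ring

section FourPoints

variable {E : Type*} [NormedAddCommGroup E] [InnerProductSpace ℝ E] {a b c d : E} {t : ℝ}

lemma inner_centroid_of_orthogonal_pairs (ha : ‖a‖ = 1) (hb : ‖b‖ = 1) (hc : ‖c‖ = 1)
    (hd : ‖d‖ = 1) (hab : ⟪a, b⟫ = t) (hcd : ⟪c, d⟫ = t) (hac : ⟪a, c⟫ = 0) (had : ⟪a, d⟫ = 0)
    (hbc : ⟪b, c⟫ = 0) (hbd : ⟪b, d⟫ = 0) :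
    ∀ p ∈ ({a, b, c, d} : Set E), ⟪(1 / 4 : ℝ) • (a + b + c + d), p⟫ = (1 + t) / 4 := by
  have hself : ∀ x : E, ‖x‖ = 1 → ⟪x, x⟫ = 1 := fun x hx => by
    rw [real_inner_self_eq_norm_sq, hx, one_pow]
  simp only [Set.mem_insert_iff, Set.mem_singleton_iff, forall_eq_or_imp, forall_eq]
  refine ⟨?_, ?_, ?_, ?_⟩ <;>
  simp only [real_inner_smul_left, inner_add_left, hself _ ha, hself _ hb, hself _ hc,
    hself _ hd, real_inner_comm a b, real_inner_comm a c, real_inner_comm a d,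
    real_inner_comm b c, real_inner_comm b d, real_inner_comm c d, hab, hcd, hac, had, hbc,
    hbd] <;> ring

lemma norm_sq_centroid_eq_of_inner_eq {s : ℝ}
    (h : ∀ p ∈ ({a, b, c, d} : Set E), ⟪(1 / 4 : ℝ) • (a + b + c + d), p⟫ = s) :
    ‖(1 / 4 : ℝ) • (a + b + c + d)‖ ^ 2 = s := by
  set q := (1 / 4 : ℝ) • (a + b + c + d) with hq
  calc ‖q‖ ^ 2 = ⟪q, q⟫ := (real_inner_self_eq_norm_sq q).symm
    _ = (1 / 4) * (⟪q, a⟫ + ⟪q, b⟫ + ⟪q, c⟫ + ⟪q, d⟫) := by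
      nth_rw 2 [hq]
      simp only [real_inner_smul_right, inner_add_right]
    _ = s := by
      rw [h a (by simp), h b (by simp), h c (by simp), h d (by simp)]
      ring

end FourPoints

lemma eq_of_inner_eq_norm_sq_of_norm_eq {E : Type*} [NormedAddCommGroup E]
    [InnerProductSpace ℝ E] {q x : E} (hinner : ⟪q, x⟫ = ‖q‖ ^ 2) (hnorm : ‖x‖ ^ 2 = ‖q‖ ^ 2) :
    x = q := by
  rw [← sub_eq_zero, ← norm_eq_zero, ← sq_eq_zero_iff, norm_sub_sq_real, real_inner_comm,
    hinner, hnorm]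
  ring

theorem constrPt_tangency_general (n k : ℕ) (hn : 4 ≤ n) (hneven : Even n)
    (i j : Fin k) (hij : i < j) (u v : ℕ)
    (hu : u ∈ Finset.Icc 1 n) (hv : v ∈ Finset.Icc 1 n) :
    (∀ p ∈ ({scafPt n k i u, scafPt n k i (almostAntip n u),
              scafPt n k j v, scafPt n k j (almostAntip n v)} :
        Set (EuclideanSpace ℝ (Fin (2 * k)))),
      ⟪constrPt n k i j u v, p⟫ = Real.sin (Real.pi / n) ^ 2 / 2)
    ∧ ‖constrPt n k i j u v‖ ^ 2 = Real.sin (Real.pi / n) ^ 2 / 2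
    ∧ (∀ x : EuclideanSpace ℝ (Fin (2 * k)),
        (∀ idx : Fin (2 * k), (idx : ℕ) ≠ 2 * (i : ℕ) → (idx : ℕ) ≠ 2 * (i : ℕ) + 1 →
          (idx : ℕ) ≠ 2 * (j : ℕ) → (idx : ℕ) ≠ 2 * (j : ℕ) + 1 → x idx = 0) →
        ⟪constrPt n k i j u v, x⟫ = ‖constrPt n k i j u v‖ ^ 2 →
        ‖x‖ ^ 2 = Real.sin (Real.pi / n) ^ 2 / 2 →
        x = constrPt n k i j u v) := by
  have hn0 : 0 < n := by omega
  have hu1 : 1 ≤ u := (Finset.mem_Icc.mp hu).1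
  have hv1 : 1 ≤ v := (Finset.mem_Icc.mp hv).1
  have hval : (1 + (2 * sin (π / n) ^ 2 - 1)) / 4 = sin (π / n) ^ 2 / 2 := by ring
  have hperp := inner_scafPt_of_ne n k hij.ne
  have hi := inner_scafPt_almostAntip n k hn0 hneven hu1 i
  have hj := inner_scafPt_almostAntip n k hn0 hneven hv1 j
  have hinner := inner_centroid_of_orthogonal_pairs (norm_scafPt n k i u) (norm_scafPt n k i _)
    (norm_scafPt n k j v) (norm_scafPt n k j _) hi hj (hperp _ _) (hperp _ _) (hperp _ _)
    (hperp _ _)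
  rw [hval] at hinner
  have hnorm := norm_sq_centroid_eq_of_inner_eq hinner
  refine ⟨hinner, hnorm, fun x _ hx hxnorm => ?_⟩
  exact eq_of_inner_eq_norm_sq_of_norm_eq hx (hxnorm.trans hnorm.symm)

/-- The constraint point `q = q_{ij}^{uv}` satisfies
`⟪q, p⟫ = sin²(π/n)/2` for each of the four points `p_{iu}, p_{iū}, p_{jv}, p_{jv̄}`, and
`‖q‖² = sin²(π/n)/2`; so all constraint points lie on the sphere of radius `sin(π/n)/√2`
about the origin, and the affine hyperplane `{x : ⟪q, x⟫ = ‖q‖²}` of the coordinate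
subspace spanned by planes `i` and `j` through the four points touches this sphere
exactly at `q`. -/
theorem constrPt_tangency (n k : ℕ) (hn : 4 ≤ n) (hneven : Even n) (hk : 2 ≤ k)
    (i j : Fin k) (hij : i < j) (u v : ℕ)
    (hu : u ∈ Finset.Icc 1 n) (hv : v ∈ Finset.Icc 1 n) :
    (∀ p ∈ ({scafPt n k i u, scafPt n k i (almostAntip n u),
              scafPt n k j v, scafPt n k j (almostAntip n v)} :
        Set (EuclideanSpace ℝ (Fin (2 * k)))),
      ⟪constrPt n k i j u v, p⟫ = Real.sin (Real.pi / n) ^ 2 / 2)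
    ∧ ‖constrPt n k i j u v‖ ^ 2 = Real.sin (Real.pi / n) ^ 2 / 2
    ∧ (∀ x : EuclideanSpace ℝ (Fin (2 * k)),
        (∀ idx : Fin (2 * k), (idx : ℕ) ≠ 2 * (i : ℕ) → (idx : ℕ) ≠ 2 * (i : ℕ) + 1 →
          (idx : ℕ) ≠ 2 * (j : ℕ) → (idx : ℕ) ≠ 2 * (j : ℕ) + 1 → x idx = 0) →
        ⟪constrPt n k i j u v, x⟫ = ‖constrPt n k i j u v‖ ^ 2 →
        ‖x‖ ^ 2 = Real.sin (Real.pi / n) ^ 2 / 2 →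
        x = constrPt n k i j u v) :=
  constrPt_tangency_general n k hn hneven i j hij u v hu hv
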